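/- Let A ⊆ B(G_μ) and B ⊆ B(G_ν) be von Neumann algebras with cyclic and separating unit vectors Λ_μ, Λ_ν defining faithful normal states μ, ν, let ω be a coupling of (A, μ) and (B, ν), and let E_ω : A → B be the associated map (defined from a cyclic representation of ω by compression to the closure of π_ω(1 ⊗ B′)Ω_ω). Then E_ω is the unique function F from A to B satisfying ω(a ⊗ b′) = ⟨Λ_ν, F(a) b′ Λ_ν⟩ for all a ∈ A and b′ ∈ B′; that is, ω(a ⊗ b′) = δ_ν(E_ω(a) ⊗ b′), where δ_ν is the diagonal coupling of ν with itself. -/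

import Mathlib

open scoped ComplexOrder

noncomputable section

noncomputable instance {H : Type} [NormedAddCommGroup H] [InnerProductSpace ℂ H]
    [CompleteSpace H] (A : VonNeumannAlgebra H) : Algebra ℂ ↥A :=
  inferInstanceAs (Algebra ℂ ↥A.toStarSubalgebra)

variable {Gμ Gν Hw : Type}
  [NormedAddCommGroup Gμ] [InnerProductSpace ℂ Gμ] [CompleteSpace Gμ]
  [NormedAddCommGroup Gν] [InnerProductSpace ℂ Gν] [CompleteSpace Gν]
  [NormedAddCommGroup Hw] [InnerProductSpace ℂ Hw] [CompleteSpace Hw]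

/-- A coupling of `(A, μ)` and `(B, ν)`: a state on the algebraic tensor product `A ⊙ B′`
(equivalently, a bilinear functional, positive on elements of the form `x* x`) whose
marginals are `μ` and `ν′`. -/
def IsCoupling (A : VonNeumannAlgebra Gμ) (B : VonNeumannAlgebra Gν) (Λμ : Gμ) (Λν : Gν)
    (ω : ↥A →ₗ[ℂ] ↥B.commutant →ₗ[ℂ] ℂ) : Prop :=
  (∀ (n : ℕ) (a : Fin n → ↥A) (b : Fin n → ↥B.commutant),
      0 ≤ ∑ i, ∑ j, ω (star (a i) * a j) (star (b i) * b j)) ∧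
  (∀ a : ↥A, ω a 1 = inner ℂ Λμ ((a : Gμ →L[ℂ] Gμ) Λμ)) ∧
  (∀ b' : ↥B.commutant, ω 1 b' = inner ℂ Λν ((b' : Gν →L[ℂ] Gν) Λν))

open ContinuousLinearMap

theorem Topology.IsInducing.denseRange_of_range_eq_closure {X Y ι : Type*}
    [TopologicalSpace X] [TopologicalSpace Y] {u : X → Y} (hu : IsInducing u) {f : ι → X}
    (h : Set.range u = closure (Set.range (u ∘ f))) : DenseRange f := by
  rw [DenseRange, dense_iff_closure_eq, hu.closure_eq_preimage_closure_image, ← Set.range_comp,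
    ← h, Set.preimage_range]

section InnerProductSpace

variable {𝕜 E F : Type*} [RCLike 𝕜] [NormedAddCommGroup E] [InnerProductSpace 𝕜 E]
  [NormedAddCommGroup F] [InnerProductSpace 𝕜 F]

theorem ContinuousLinearMap.ext_of_denseRange_inner {ι κ : Type*} {f : ι → E} {g : κ → F}
    (hf : DenseRange f) (hg : DenseRange g) {X Y : E →L[𝕜] F}
    (h : ∀ i j, inner 𝕜 (g i) (X (f j)) = inner 𝕜 (g i) (Y (f j))) : X = Y :=
  coeFn_injective <| hf.equalizer X.continuous Y.continuous <|
    funext fun j => hg.eq_of_inner_right 𝕜 (h · j)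

variable [CompleteSpace E]

theorem inner_apply_apply_of_commute_adjoint {C T : E →L[𝕜] E} (h : Commute T (adjoint C))
    (x y : E) : inner 𝕜 (C x) (T y) = inner 𝕜 x (T (adjoint C y)) := by
  rw [← adjoint_inner_right]
  exact congrArg _ (DFunLike.congr_fun h.eq.symm y)

end InnerProductSpace

theorem VonNeumannAlgebra.commute_adjoint_of_mem_commutant {H : Type*} [NormedAddCommGroup H]
    [InnerProductSpace ℂ H] [CompleteSpace H] {B : VonNeumannAlgebra H} {b c : H →L[ℂ] H}
    (hb : b ∈ B) (hc : c ∈ B.commutant) : Commute b (adjoint c) :=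
  mem_commutant_iff.mp (star_mem hc) b hb

theorem compression_unique_characterization_general
    (A : VonNeumannAlgebra Gμ) (B : VonNeumannAlgebra Gν) (Λν : Gν)
    (ω : ↥A →ₗ[ℂ] ↥B.commutant →ₗ[ℂ] ℂ)
    -- a cyclic representation of `(A ⊙ B′, ω)`
    (π₁ : ↥A →⋆ₐ[ℂ] (Hw →L[ℂ] Hw)) (π₂ : ↥B.commutant →⋆ₐ[ℂ] (Hw →L[ℂ] Hw)) (Ωw : Hw)
    (hcomm : ∀ (a : ↥A) (b' : ↥B.commutant), Commute (π₁ a) (π₂ b'))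
    (hrep : ∀ (a : ↥A) (b' : ↥B.commutant), ω a b' = inner ℂ Ωw (π₁ a (π₂ b' Ωw)))
    -- the unitary `u_ν : G_ν → H_ν ⊆ H_ω`
    (uν : Gν →L[ℂ] Hw) (huνiso : ∀ ξ : Gν, ‖uν ξ‖ = ‖ξ‖)
    (huν : ∀ b' : ↥B.commutant, uν ((b' : Gν →L[ℂ] Gν) Λν) = π₂ b' Ωw)
    (huνrange : Set.range uν = closure (Set.range fun b' : ↥B.commutant => π₂ b' Ωw)) :
    (∀ (a : ↥A) (b' : ↥B.commutant),
      ω a b' = inner ℂ Λν ((((ContinuousLinearMap.adjoint uν).comp ((π₁ a).comp uν)))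
        ((b' : Gν →L[ℂ] Gν) Λν))) ∧
    (∀ F : ↥A → ↥B,
      (∀ (a : ↥A) (b' : ↥B.commutant),
        ω a b' = inner ℂ Λν ((F a : Gν →L[ℂ] Gν) ((b' : Gν →L[ℂ] Gν) Λν))) →
      ∀ a : ↥A,
        (F a : Gν →L[ℂ] Gν) = (ContinuousLinearMap.adjoint uν).comp ((π₁ a).comp uν)) := by
  have hΩ : uν Λν = Ωw := by simpa using huν 1
  have hdense : DenseRange fun b' : ↥B.commutant => (b' : Gν →L[ℂ] Gν) Λν :=
    (AddMonoidHomClass.isometry_of_norm uν huνiso).isEmbedding.isInducing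
      |>.denseRange_of_range_eq_closure
        (huνrange.trans (congrArg (closure ∘ Set.range) (funext huν).symm))
  refine ⟨fun a b' => by rw [hrep, comp_apply, comp_apply, adjoint_inner_right, hΩ, huν],
    fun F hF a => ext_of_denseRange_inner hdense hdense fun c' b' => ?_⟩
  -- both sides equal `ω a (c'* b')`, since `F a` commutes with `B′` and `π₁ a` with `π₂(B′)`
  calc inner ℂ ((c' : Gν →L[ℂ] Gν) Λν) ((F a : Gν →L[ℂ] Gν) ((b' : Gν →L[ℂ] Gν) Λν))
      = ω a (star c' * b') := by
        rw [inner_apply_apply_of_commute_adjoint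
          (VonNeumannAlgebra.commute_adjoint_of_mem_commutant (F a).2 c'.2), hF]
        rfl
    _ = inner ℂ (π₂ c' Ωw) (π₁ a (π₂ b' Ωw)) := by
        have hcomm' : Commute (π₁ a) (adjoint (π₂ c')) := by
          rw [← star_eq_adjoint, ← map_star]; exact hcomm a _
        rw [inner_apply_apply_of_commute_adjoint hcomm', hrep, ← star_eq_adjoint, ← map_star,
          map_mul]
        rfl
    _ = _ := by rw [comp_apply, comp_apply, adjoint_inner_right, huν, huν]

/-- The compression map `E_ω(a) = u_ν* ι* π_ω(a ⊗ 1) ι u_ν` is the unique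
function `F : A → B` such that `ω(a ⊗ b′) = ⟨Λ_ν, F(a) b′ Λ_ν⟩ (= δ_ν(F(a) ⊗ b′))` for all
`a ∈ A` and `b′ ∈ B′`. -/
theorem compression_unique_characterization
    (A : VonNeumannAlgebra Gμ) (B : VonNeumannAlgebra Gν) (Λμ : Gμ) (Λν : Gν)
    (hΛμunit : ‖Λμ‖ = 1) (hΛνunit : ‖Λν‖ = 1)
    (hΛμcyc : Dense (Set.range fun a : ↥A => (a : Gμ →L[ℂ] Gμ) Λμ))
    (hΛμsep : ∀ a : ↥A, (a : Gμ →L[ℂ] Gμ) Λμ = 0 → a = 0)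
    (hΛνcyc : Dense (Set.range fun b : ↥B => (b : Gν →L[ℂ] Gν) Λν))
    (hΛνsep : ∀ b : ↥B, (b : Gν →L[ℂ] Gν) Λν = 0 → b = 0)
    (ω : ↥A →ₗ[ℂ] ↥B.commutant →ₗ[ℂ] ℂ) (hω : IsCoupling A B Λμ Λν ω)
    -- a cyclic representation of `(A ⊙ B′, ω)`
    (π₁ : ↥A →⋆ₐ[ℂ] (Hw →L[ℂ] Hw)) (π₂ : ↥B.commutant →⋆ₐ[ℂ] (Hw →L[ℂ] Hw)) (Ωw : Hw)
    (hcomm : ∀ (a : ↥A) (b' : ↥B.commutant), Commute (π₁ a) (π₂ b'))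
    (hcyc : Dense (Submodule.span ℂ
      (Set.range fun p : ↥A × ↥B.commutant => π₁ p.1 (π₂ p.2 Ωw)) : Set Hw))
    (hrep : ∀ (a : ↥A) (b' : ↥B.commutant), ω a b' = inner ℂ Ωw (π₁ a (π₂ b' Ωw)))
    -- the unitary `u_ν : G_ν → H_ν ⊆ H_ω`
    (uν : Gν →L[ℂ] Hw) (huνiso : ∀ ξ : Gν, ‖uν ξ‖ = ‖ξ‖)
    (huν : ∀ b' : ↥B.commutant, uν ((b' : Gν →L[ℂ] Gν) Λν) = π₂ b' Ωw)
    (huνrange : Set.range uν = closure (Set.range fun b' : ↥B.commutant => π₂ b' Ωw)) :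
    (∀ (a : ↥A) (b' : ↥B.commutant),
      ω a b' = inner ℂ Λν ((((ContinuousLinearMap.adjoint uν).comp ((π₁ a).comp uν)))
        ((b' : Gν →L[ℂ] Gν) Λν))) ∧
    (∀ F : ↥A → ↥B,
      (∀ (a : ↥A) (b' : ↥B.commutant),
        ω a b' = inner ℂ Λν ((F a : Gν →L[ℂ] Gν) ((b' : Gν →L[ℂ] Gν) Λν))) →
      ∀ a : ↥A,
        (F a : Gν →L[ℂ] Gν) = (ContinuousLinearMap.adjoint uν).comp ((π₁ a).comp uν)) :=
  compression_unique_characterization_general A B Λν ω π₁ π₂ Ωw hcomm hrep uν huνiso huν huνrange
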